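/- Let ξ > 0 be real and let b be real with 0 ≤ b ≤ (√2 − 1)·ξ. Set β = −i·b. Then min{ 2|β|, √2·|ξ − β|, √2·|ξ + β|, √2·|ξ − iβ|, √2·|ξ + iβ|, 2ξ } = 2b. -/

import Mathlib

open Real Complex

/-- The minimum pairwise Euclidean distance of the 8-point composite constellation. -/
noncomputable def Dmin (ξ : ℝ) (β : ℂ) : ℝ :=
  min (min (min (2 * ‖β‖) (Real.sqrt 2 * ‖(ξ : ℂ) - β‖))
        (min (Real.sqrt 2 * ‖(ξ : ℂ) + β‖)
          (Real.sqrt 2 * ‖(ξ : ℂ) - Complex.I * β‖)))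
      (min (Real.sqrt 2 * ‖(ξ : ℂ) + Complex.I * β‖) (2 * ξ))

/-! For `β = -i b` the competing distances are `√2 √(ξ² + b²)` (twice), `√2 |ξ ∓ b|` and `2 ξ`.
Once `0 ≤ b ≤ ξ`, all but `√2 (ξ - b)` clearly dominate `2 b`, and `2 b ≤ √2 (ξ - b)` holds
exactly up to `b = (√2 - 1) ξ`, since `(2 + √2)(√2 - 1) = √2`. -/

lemma Dmin_eq_two_mul_norm {ξ : ℝ} {β : ℂ}
    (h₁ : 2 * ‖β‖ ≤ √2 * ‖(ξ : ℂ) - β‖) (h₂ : 2 * ‖β‖ ≤ √2 * ‖(ξ : ℂ) + β‖)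
    (h₃ : 2 * ‖β‖ ≤ √2 * ‖(ξ : ℂ) - I * β‖) (h₄ : 2 * ‖β‖ ≤ √2 * ‖(ξ : ℂ) + I * β‖)
    (h₅ : ‖β‖ ≤ ξ) :
    Dmin ξ β = 2 * ‖β‖ := by
  refine le_antisymm (min_le_of_left_le (min_le_of_left_le (min_le_left _ _))) ?_
  exact le_min (le_min (le_min le_rfl h₁) (le_min h₂ h₃)) (le_min h₄ (by linarith))

lemma norm_neg_I_mul_ofReal (b : ℝ) : ‖-I * b‖ = |b| := by
  simp

lemma norm_ofReal_sub_neg_I_mul (ξ b : ℝ) : ‖(ξ : ℂ) - -I * b‖ = √(ξ ^ 2 + b ^ 2) := by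
  rw [show (ξ : ℂ) - -I * b = ξ + b * I by ring, norm_add_mul_I]

lemma norm_ofReal_add_neg_I_mul (ξ b : ℝ) : ‖(ξ : ℂ) + -I * b‖ = √(ξ ^ 2 + b ^ 2) := by
  rw [show (ξ : ℂ) + -I * b = ξ + ((-b : ℝ) : ℂ) * I by push_cast; ring, norm_add_mul_I, neg_sq]

lemma I_mul_neg_I_mul (z : ℂ) : I * (-I * z) = z := by
  rw [← mul_assoc, mul_neg, I_mul_I, neg_neg, one_mul]

lemma norm_ofReal_sub_I_mul_neg_I_mul (ξ b : ℝ) : ‖(ξ : ℂ) - I * (-I * b)‖ = |ξ - b| := by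
  rw [I_mul_neg_I_mul, ← ofReal_sub, norm_real, Real.norm_eq_abs]

lemma norm_ofReal_add_I_mul_neg_I_mul (ξ b : ℝ) : ‖(ξ : ℂ) + I * (-I * b)‖ = |ξ + b| := by
  rw [I_mul_neg_I_mul, ← ofReal_add, norm_real, Real.norm_eq_abs]

lemma two_mul_abs_le_sqrt_two_mul_sqrt {ξ b : ℝ} (h : |b| ≤ |ξ|) :
    2 * |b| ≤ √2 * √(ξ ^ 2 + b ^ 2) := by
  rw [← Real.sqrt_mul zero_le_two, Real.le_sqrt (by positivity) (by positivity)]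
  nlinarith [sq_le_sq.mpr h, sq_abs b]

lemma two_mul_le_sqrt_two_mul_sub {ξ b : ℝ} (h : b ≤ (√2 - 1) * ξ) :
    2 * b ≤ √2 * (ξ - b) := by
  have hroot : (2 + √2) * ((√2 - 1) * ξ) = √2 * ξ := by
    linear_combination ξ * Real.sq_sqrt zero_le_two
  linarith [mul_le_mul_of_nonneg_left h (by positivity : 0 ≤ 2 + √2)]

theorem stmt_11_general (ξ b : ℝ) (hb : 0 ≤ b) (hb' : b ≤ (Real.sqrt 2 - 1) * ξ)
    (β : ℂ) (hβ : β = -Complex.I * (b : ℂ)) :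
    Dmin ξ β = 2 * b := by
  have hξ : 0 ≤ ξ := nonneg_of_mul_nonneg_right (hb.trans hb') (sub_pos.mpr one_lt_sqrt_two)
  have hs : √2 ≤ 2 := by nlinarith [Real.sq_sqrt zero_le_two, Real.sqrt_nonneg 2]
  have hbξ : b ≤ ξ := hb'.trans (mul_le_of_le_one_left hξ (by linarith))
  have h_sub : 2 * b ≤ √2 * (ξ - b) := two_mul_le_sqrt_two_mul_sub hb'
  have h_add : 2 * b ≤ √2 * (ξ + b) := by linarith [mul_nonneg (Real.sqrt_nonneg 2) hb]
  have h_diag : 2 * b ≤ √2 * √(ξ ^ 2 + b ^ 2) := by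
    simpa [abs_of_nonneg hb] using
      two_mul_abs_le_sqrt_two_mul_sqrt (abs_le_abs_of_nonneg hb hbξ)
  subst hβ
  have hnorm : ‖-I * (b : ℂ)‖ = b := by rw [norm_neg_I_mul_ofReal, abs_of_nonneg hb]
  rw [Dmin_eq_two_mul_norm
    (by rwa [hnorm, norm_ofReal_sub_neg_I_mul])
    (by rwa [hnorm, norm_ofReal_add_neg_I_mul])
    (by rwa [hnorm, norm_ofReal_sub_I_mul_neg_I_mul, abs_of_nonneg (sub_nonneg.mpr hbξ)])
    (by rwa [hnorm, norm_ofReal_add_I_mul_neg_I_mul, abs_of_nonneg (add_nonneg hξ hb)])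
    (by rwa [hnorm]), hnorm]

theorem stmt_11 (ξ b : ℝ) (hξ : 0 < ξ) (hb : 0 ≤ b) (hb' : b ≤ (Real.sqrt 2 - 1) * ξ)
    (β : ℂ) (hβ : β = -Complex.I * (b : ℂ)) :
    Dmin ξ β = 2 * b :=
  stmt_11_general ξ b hb hb' β hβ
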